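/- Let f (with white fixed point set W) be a decorated permutation of [2n] of type C, let 𝓘 be its Grassmann necklace, and let M be the positroid of 𝓘. Let C be a weakly separated collection in M and let I ∈ C be pair-free. If a ∈ [n] and f⁻¹(a) ∈ [n] with f⁻¹(a) < a, then a' ∈ I. -/

import Mathlib

open Finset

/-- Position of `x` in the cyclic order on `[m] = {1,…,m}` starting at `a`:
`a` has position `0`, `a+1` position `1`, …, `a-1` position `m-1`. -/
def cpos (m a x : ℕ) : ℕ := (x + m - a) % m

/-- The strict cyclic order `x <_a y` on `[m]`. -/
def clt (m a x y : ℕ) : Prop := cpos m a x < cpos m a y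

instance (m a x y : ℕ) : Decidable (clt m a x y) :=
  inferInstanceAs (Decidable (_ < _))

/-- `I` and `J` are weakly separated as subsets of `[m]`: there do not exist
`c ∈ [m]` and `x₁ <_c x₂ <_c x₃ <_c x₄` with `x₁, x₃ ∈ I∖J` and `x₂, x₄ ∈ J∖I`. -/
def WSep (m : ℕ) (I J : Finset ℕ) : Prop :=
  ¬ ∃ c x₁ x₂ x₃ x₄ : ℕ, c ∈ Finset.Icc 1 m ∧
      x₁ ∈ I \ J ∧ x₃ ∈ I \ J ∧ x₂ ∈ J \ I ∧ x₄ ∈ J \ I ∧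
      clt m c x₁ x₂ ∧ clt m c x₂ x₃ ∧ clt m c x₃ x₄

/-- A weakly separated collection of `k`-element subsets of `[m]`. -/
def IsWSColl (m k : ℕ) (C : Finset (Finset ℕ)) : Prop :=
  (∀ I ∈ C, I ⊆ Finset.Icc 1 m ∧ I.card = k) ∧
    ∀ I ∈ C, ∀ J ∈ C, WSep m I J

/-- `Ī := [2n] ∖ {i' : i ∈ I}` where `i' = 2n+1-i`. -/
def bar (n : ℕ) (I : Finset ℕ) : Finset ℕ :=
  Finset.Icc 1 (2 * n) \ I.image fun i => 2 * n + 1 - i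

/-- A collection is symmetric if it is closed under `I ↦ Ī`. -/
def IsSym (n : ℕ) (C : Finset (Finset ℕ)) : Prop := ∀ I ∈ C, bar n I ∈ C

/-- `I` has a full pair at `{a, a'}`. -/
def FullPair (n : ℕ) (I : Finset ℕ) (a : ℕ) : Prop := a ∈ I ∧ 2 * n + 1 - a ∈ I

/-- `I` has an empty pair at `{a, a'}`. -/
def EmptyPair (n : ℕ) (I : Finset ℕ) (a : ℕ) : Prop := a ∉ I ∧ 2 * n + 1 - a ∉ I

instance (n : ℕ) (I : Finset ℕ) (a : ℕ) : Decidable (FullPair n I a) :=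
  inferInstanceAs (Decidable (_ ∈ I ∧ _ ∈ I))

instance (n : ℕ) (I : Finset ℕ) (a : ℕ) : Decidable (EmptyPair n I a) :=
  inferInstanceAs (Decidable (_ ∉ I ∧ _ ∉ I))

/-- `I` is pair-free: it has no full pair. -/
def PairFree (n : ℕ) (I : Finset ℕ) : Prop :=
  ∀ a ∈ Finset.Icc 1 n, ¬ FullPair n I a

instance (n : ℕ) (I : Finset ℕ) : Decidable (PairFree n I) :=
  inferInstanceAs (Decidable (∀ a ∈ Finset.Icc 1 n, ¬ FullPair n I a))

/-- `I` is admissible: `I` and `Ī` are weakly separated. -/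
def Admissible (n : ℕ) (I : Finset ℕ) : Prop := WSep (2 * n) I (bar n I)

/-- `I` is left-handed: admissible, has at least one full pair, and every full
pair of `I` is above every empty pair of `I`. -/
def LeftHanded (n : ℕ) (I : Finset ℕ) : Prop :=
  Admissible n I ∧ (∃ a ∈ Finset.Icc 1 n, FullPair n I a) ∧
    ∀ a ∈ Finset.Icc 1 n, ∀ b ∈ Finset.Icc 1 n,
      FullPair n I a → EmptyPair n I b → a < b

/-- The Gale order `I ≤_a J`: comparing the sorted lists of positions (in the
cyclic order starting at `a`) elementwise. -/
def galeLe (m a : ℕ) (I J : Finset ℕ) : Prop :=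
  List.Forall₂ (· ≤ ·) ((I.image (cpos m a)).sort (· ≤ ·))
    ((J.image (cpos m a)).sort (· ≤ ·))

/-- A Grassmann necklace of type `(n, 2n)`: a sequence `I_1, …, I_{2n}` of
`n`-element subsets of `[2n]` with `I_i ∖ {i} ⊆ I_{i+1}` (indices mod `2n`). -/
def IsNecklace (n : ℕ) (ℐ : ℕ → Finset ℕ) : Prop :=
  (∀ a ∈ Finset.Icc 1 (2 * n), ℐ a ⊆ Finset.Icc 1 (2 * n) ∧ (ℐ a).card = n) ∧
    ∀ i ∈ Finset.Icc 1 (2 * n), ℐ i \ {i} ⊆ ℐ (i % (2 * n) + 1)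

/-- A Grassmann necklace is of type C if `I_{i'} = bar (I_{i+1})` (indices mod `2n`). -/
def IsTypeC (n : ℕ) (ℐ : ℕ → Finset ℕ) : Prop :=
  ∀ i ∈ Finset.Icc 1 (2 * n), ℐ (2 * n + 1 - i) = bar n (ℐ (i % (2 * n) + 1))

/-- The positroid of a Grassmann necklace: all `n`-element subsets `J` of `[2n]`
with `I_a ≤_a J` for all `a ∈ [2n]`. -/
def positroid (n : ℕ) (ℐ : ℕ → Finset ℕ) : Set (Finset ℕ) :=
  {J | J ⊆ Finset.Icc 1 (2 * n) ∧ J.card = n ∧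
    ∀ a ∈ Finset.Icc 1 (2 * n), galeLe (2 * n) a (ℐ a) J}

/-- A weakly separated collection in the positroid of the necklace `ℐ`:
`{I_1,…,I_{2n}} ⊆ C ⊆ M` and `C` is pairwise weakly separated. -/
def IsWSCollIn (n : ℕ) (ℐ : ℕ → Finset ℕ) (C : Finset (Finset ℕ)) : Prop :=
  (∀ a ∈ Finset.Icc 1 (2 * n), ℐ a ∈ C) ∧ (∀ J ∈ C, J ∈ positroid n ℐ) ∧
    ∀ I ∈ C, ∀ J ∈ C, WSep (2 * n) I J

/-- A decorated permutation of `[2n]` of type C: a bijection `f` of `[2n]` with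
`f(i') = (f(i))'`, together with a set `W` of white fixed points such that a
fixed point `i` lies in `W` iff `i'` does not. -/
def IsDecPermC (n : ℕ) (f : Equiv.Perm ℕ) (W : Finset ℕ) : Prop :=
  (∀ i ∈ Finset.Icc 1 (2 * n), f i ∈ Finset.Icc 1 (2 * n)) ∧
  (∀ i ∈ Finset.Icc 1 (2 * n), f (2 * n + 1 - i) = 2 * n + 1 - f i) ∧
  (∀ w ∈ W, w ∈ Finset.Icc 1 (2 * n) ∧ f w = w) ∧
  (∀ i ∈ Finset.Icc 1 (2 * n), f i = i → (i ∈ W ↔ 2 * n + 1 - i ∉ W))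

/-- The Grassmann necklace of a decorated permutation:
`I_a = {i ∈ [2n] : i ≠ f⁻¹(i) and i <_a f⁻¹(i)} ∪ W`. -/
def necklaceOf (n : ℕ) (f : Equiv.Perm ℕ) (W : Finset ℕ) (a : ℕ) : Finset ℕ :=
  ((Finset.Icc 1 (2 * n)).filter fun i => i ≠ f.symm i ∧ clt (2 * n) a i (f.symm i)) ∪ W

/-- `(i,j)` is an alignment of `f`: the numbers `i, f(i), f(j), j` are distinct
and appear in cyclic order. -/
def IsAlignment (n : ℕ) (f : Equiv.Perm ℕ) (i j : ℕ) : Prop :=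
  ([i, f i, f j, j] : List ℕ).Pairwise (· ≠ ·) ∧
    ∃ c ∈ Finset.Icc 1 (2 * n), clt (2 * n) c i (f i) ∧
      clt (2 * n) c (f i) (f j) ∧ clt (2 * n) c (f j) j

/-!
Take `J = I₁`. A pair-free `n`-subset `I` of `[2n]` and, by type-C symmetry, `J` both contain
exactly one element of each pair `{x, x'}`, so `x ↦ x'` maps `I ∖ J` onto `J ∖ I`. If `a' ∉ I`,
then `a ∈ I ∖ J` (as `f⁻¹(a) < a`) and `a' ∈ J ∖ I`, and weak separation of `I` and `J` forces
`I ∖ J ⊆ [n]`. Swapping each element of `I ∖ J` for its partner then strictly raises the sum of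
positions, so `∑ I < ∑ J`, while `I₁ ≤₁ I` in the Gale order gives `∑ J ≤ ∑ I`.
-/

lemma cpos_eq {m c x : ℕ} (hc : c ∈ Icc 1 m) (hx : x ≤ m) :
    cpos m c x = if c ≤ x then x - c else x + m - c := by
  rw [mem_Icc] at hc
  unfold cpos
  split_ifs with hcx
  · rw [show x + m - c = x - c + m by omega, Nat.add_mod_right, Nat.mod_eq_of_lt (by omega)]
  · exact Nat.mod_eq_of_lt (by omega)

lemma clt_iff {m c x y : ℕ} (hc : c ∈ Icc 1 m) (hx : x ≤ m) (hy : y ≤ m) :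
    clt m c x y ↔ (if c ≤ x then x - c else x + m - c) < (if c ≤ y then y - c else y + m - c) := by
  rw [clt, cpos_eq hc hx, cpos_eq hc hy]

lemma cpos_one {m x : ℕ} (hx : x ∈ Icc 1 m) : cpos m 1 x = x - 1 := by
  rw [mem_Icc] at hx
  rw [cpos_eq (mem_Icc.mpr ⟨le_rfl, by omega⟩) hx.2, if_pos hx.1]

lemma cpos_injOn {m c : ℕ} (hc : c ∈ Icc 1 m) : Set.InjOn (cpos m c) (Icc 1 m) := by
  intro x hx y hy hxy
  simp only [coe_Icc, Set.mem_Icc] at hx hy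
  rw [cpos_eq hc hx.2, cpos_eq hc hy.2] at hxy
  rw [mem_Icc] at hc
  split_ifs at hxy <;> omega

lemma not_wSep_of_interleaved {m : ℕ} {I J : Finset ℕ} {x₁ x₂ x₃ x₄ : ℕ}
    (h₁ : 1 ≤ x₁) (h₁₂ : x₁ < x₂) (h₂₃ : x₂ < x₃) (h₃₄ : x₃ < x₄) (h₄ : x₄ ≤ m)
    (hx₁ : x₁ ∈ I \ J) (hx₂ : x₂ ∈ J \ I) (hx₃ : x₃ ∈ I \ J) (hx₄ : x₄ ∈ J \ I) :
    ¬ WSep m I J := by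
  have hc : 1 ∈ Icc 1 m := mem_Icc.mpr ⟨le_rfl, by omega⟩
  refine fun hws => hws ⟨1, x₁, x₂, x₃, x₄, hc, hx₁, hx₃, hx₂, hx₄, ?_, ?_, ?_⟩ <;>
    rw [clt_iff hc (by omega) (by omega)] <;> split_ifs <;> omega

lemma not_wSep_of_interleaved' {m : ℕ} {I J : Finset ℕ} {x₁ x₂ x₃ x₄ : ℕ}
    (h₁ : 1 ≤ x₁) (h₁₂ : x₁ < x₂) (h₂₃ : x₂ < x₃) (h₃₄ : x₃ < x₄) (h₄ : x₄ ≤ m)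
    (hx₁ : x₁ ∈ J \ I) (hx₂ : x₂ ∈ I \ J) (hx₃ : x₃ ∈ J \ I) (hx₄ : x₄ ∈ I \ J) :
    ¬ WSep m I J := by
  have hc : x₂ ∈ Icc 1 m := mem_Icc.mpr ⟨by omega, by omega⟩
  -- read cyclically from `x₂`, the four points alternate starting in `I ∖ J`
  refine fun hws => hws ⟨x₂, x₂, x₃, x₄, x₁, hc, hx₂, hx₄, hx₃, hx₁, ?_, ?_, ?_⟩ <;>
    rw [clt_iff hc (by omega) (by omega)] <;> split_ifs <;> omega

lemma galeLe.sum_cpos_le {m c : ℕ} {I J : Finset ℕ} (h : galeLe m c I J)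
    (hI : Set.InjOn (cpos m c) I) (hJ : Set.InjOn (cpos m c) J) :
    ∑ x ∈ I, cpos m c x ≤ ∑ x ∈ J, cpos m c x := by
  have sum_sort (s : Finset ℕ) : (s.sort (· ≤ ·)).sum = ∑ x ∈ s, x :=
    (sort_perm_toList s _).sum_eq.trans (sum_toList s)
  have := h.sum_le_sum
  rwa [sum_sort, sum_sort, sum_image hI, sum_image hJ] at this

lemma sum_lt_sum_of_image_sdiff {I J : Finset ℕ} {g σ : ℕ → ℕ}
    (himg : (I \ J).image σ = J \ I) (hσ : Set.InjOn σ (I \ J : Finset ℕ)) (hne : (I \ J).Nonempty)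
    (hlt : ∀ x ∈ I \ J, g x < g (σ x)) :
    ∑ x ∈ I, g x < ∑ x ∈ J, g x := by
  rw [← sum_inter_add_sum_sdiff I J, ← sum_inter_add_sum_sdiff J I, inter_comm J I, ← himg,
    sum_image hσ]
  exact Nat.add_lt_add_left (sum_lt_sum_of_nonempty hne hlt) _

/-- For `S ⊆ [2n]` this says `bar n S = S`. -/
def OneOfEachPair (n : ℕ) (S : Finset ℕ) : Prop :=
  ∀ x ∈ Icc 1 (2 * n), x ∈ S ↔ 2 * n + 1 - x ∉ S

section TypeC

variable {n : ℕ}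

lemma prime_mem_Icc {x : ℕ} (hx : x ∈ Icc 1 (2 * n)) : 2 * n + 1 - x ∈ Icc 1 (2 * n) := by
  rw [mem_Icc] at hx ⊢
  omega

/-- `x ↦ min x x'` is injective on a pair-free `I`, hence onto `[n]` by counting. -/
lemma PairFree.oneOfEachPair {I : Finset ℕ} (hpf : PairFree n I) (hsub : I ⊆ Icc 1 (2 * n))
    (hcard : I.card = n) : OneOfEachPair n I := by
  have hmin_mem (x : ℕ) (hx : x ∈ I) : min x (2 * n + 1 - x) ∈ Icc 1 n := by
    have := mem_Icc.mp (hsub hx)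
    rw [mem_Icc]
    omega
  have hfull (x : ℕ) (hx : x ∈ I) (hx' : 2 * n + 1 - x ∈ I) : False := by
    have := mem_Icc.mp (hsub hx)
    refine hpf _ (hmin_mem x hx) ⟨?_, ?_⟩ <;>
      rcases min_choice x (2 * n + 1 - x) with h | h <;> rw [h] <;>
      first | assumption | rwa [show 2 * n + 1 - (2 * n + 1 - x) = x by omega]
  have hsurj := surj_on_of_inj_on_of_card_le (fun x _ => min x (2 * n + 1 - x)) hmin_mem
    (fun x y hx hy hxy => by
      have := mem_Icc.mp (hsub hx)
      have := mem_Icc.mp (hsub hy)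
      by_contra hne
      exact hfull x hx (by rwa [show 2 * n + 1 - x = y by omega]))
    (by rw [Nat.card_Icc, hcard]; omega)
  intro x hx
  have hxb := mem_Icc.mp hx
  refine ⟨fun hxI hx'I => hfull x hxI hx'I, fun hx'I => ?_⟩
  obtain ⟨y, hy, hxy⟩ := hsurj (min x (2 * n + 1 - x)) (by rw [mem_Icc]; omega)
  have := mem_Icc.mp (hsub hy)
  obtain rfl | rfl : y = x ∨ y = 2 * n + 1 - x := by omega
  exacts [hy, absurd hy hx'I]

lemma OneOfEachPair.image_sdiff {I J : Finset ℕ} (hI : OneOfEachPair n I)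
    (hJ : OneOfEachPair n J) (hIsub : I ⊆ Icc 1 (2 * n)) (hJsub : J ⊆ Icc 1 (2 * n)) :
    (I \ J).image (2 * n + 1 - ·) = J \ I := by
  ext y
  simp only [mem_image, mem_sdiff]
  constructor
  · rintro ⟨x, ⟨hxI, hxJ⟩, rfl⟩
    exact ⟨not_not.mp (mt (hJ x (hIsub hxI)).mpr hxJ), (hI x (hIsub hxI)).mp hxI⟩
  · rintro ⟨hyJ, hyI⟩
    have hy := hJsub hyJ
    have hyy : 2 * n + 1 - (2 * n + 1 - y) = y := by rw [mem_Icc] at hy; omega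
    refine ⟨2 * n + 1 - y, ⟨?_, ?_⟩, hyy⟩
    · exact (hI _ (prime_mem_Icc hy)).mpr (by rwa [hyy])
    · exact fun h => (hJ _ (prime_mem_Icc hy)).mp h (by rwa [hyy])

/-- An element `y > n` of `I ∖ J` would interleave `a, a'` with `y', y`. -/
lemma WSep.le_of_mem_sdiff {I J : Finset ℕ} (hws : WSep (2 * n) I J)
    (himg : (I \ J).image (2 * n + 1 - ·) = J \ I) (hsub : I ⊆ Icc 1 (2 * n))
    {a : ℕ} (ha : a ∈ I \ J) (han : a ≤ n) : ∀ y ∈ I \ J, y ≤ n := by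
  intro y hy
  have ha' : 2 * n + 1 - a ∈ J \ I := himg ▸ mem_image_of_mem _ ha
  have hy' : 2 * n + 1 - y ∈ J \ I := himg ▸ mem_image_of_mem _ hy
  have hab := mem_Icc.mp (hsub (mem_sdiff.mp ha).1)
  have hyb := mem_Icc.mp (hsub (mem_sdiff.mp hy).1)
  by_contra hyn
  rcases lt_trichotomy a (2 * n + 1 - y) with h | h | h
  · exact not_wSep_of_interleaved hab.1 h (by omega) (by omega) (by omega) ha hy' hy ha' hws
  · exact (mem_sdiff.mp hy').2 (h ▸ (mem_sdiff.mp ha).1)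
  · exact not_wSep_of_interleaved' (by omega) h (by omega) (by omega) hyb.2 hy' ha ha' hy hws

lemma sum_cpos_one_lt_of_image_sdiff {I J : Finset ℕ}
    (himg : (I \ J).image (2 * n + 1 - ·) = J \ I) (hsub : I ⊆ Icc 1 (2 * n))
    (hne : (I \ J).Nonempty) (hlow : ∀ y ∈ I \ J, y ≤ n) :
    ∑ x ∈ I, cpos (2 * n) 1 x < ∑ x ∈ J, cpos (2 * n) 1 x := by
  refine sum_lt_sum_of_image_sdiff himg ?_ hne fun x hx => ?_
  · intro x hx y hy hxy
    have := mem_Icc.mp (hsub (mem_sdiff.mp hx).1)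
    have := mem_Icc.mp (hsub (mem_sdiff.mp hy).1)
    simp only at hxy
    omega
  · have hx2n := hsub (mem_sdiff.mp hx).1
    have := hlow x hx
    have := mem_Icc.mp hx2n
    rw [cpos_one hx2n, cpos_one (prime_mem_Icc hx2n)]
    omega

variable {f : Equiv.Perm ℕ} {W : Finset ℕ}

lemma IsDecPermC.symm_mem_Icc (hf : IsDecPermC n f W) {j : ℕ} (hj : j ∈ Icc 1 (2 * n)) :
    f.symm j ∈ Icc 1 (2 * n) := by
  have hbij := ((Icc 1 (2 * n)).finite_toSet.injOn_iff_bijOn_of_mapsTo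
    (fun i hi => hf.1 i hi)).mp f.injective.injOn
  obtain ⟨i, hi, rfl⟩ := hbij.surjOn (show j ∈ (Icc 1 (2 * n) : Set ℕ) from hj)
  simpa using hi

lemma IsDecPermC.symm_prime (hf : IsDecPermC n f W) {j : ℕ} (hj : j ∈ Icc 1 (2 * n)) :
    f.symm (2 * n + 1 - j) = 2 * n + 1 - f.symm j := by
  rw [Equiv.symm_apply_eq, hf.2.1 _ (hf.symm_mem_Icc hj), Equiv.apply_symm_apply]

lemma mem_necklaceOf_one_iff (hf : IsDecPermC n f W) {i : ℕ} (hi : i ∈ Icc 1 (2 * n))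
    (hfi : f.symm i ≠ i) : i ∈ necklaceOf n f W 1 ↔ i < f.symm i := by
  have hiW : i ∉ W := fun h => hfi (f.symm_apply_eq.mpr (hf.2.2.1 i h).2.symm)
  rw [necklaceOf, mem_union, mem_filter, or_iff_left hiW, clt, cpos_one hi,
    cpos_one (hf.symm_mem_Icc hi)]
  simp only [hi, true_and, ne_eq, Ne.symm hfi, not_false_eq_true]
  have := mem_Icc.mp hi
  have := mem_Icc.mp (hf.symm_mem_Icc hi)
  omega

lemma mem_necklaceOf_one_iff_of_fixed {i : ℕ} (hfi : f.symm i = i) :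
    i ∈ necklaceOf n f W 1 ↔ i ∈ W := by
  simp [necklaceOf, hfi]

lemma oneOfEachPair_necklaceOf_one (hf : IsDecPermC n f W) :
    OneOfEachPair n (necklaceOf n f W 1) := by
  intro j hj
  have hj' := prime_mem_Icc hj
  have hsp := hf.symm_prime hj
  have := mem_Icc.mp hj
  have := mem_Icc.mp (hf.symm_mem_Icc hj)
  by_cases hfix : f.symm j = j
  · rw [mem_necklaceOf_one_iff_of_fixed hfix, mem_necklaceOf_one_iff_of_fixed (by omega)]
    exact hf.2.2.2 j hj (f.symm_apply_eq.mp hfix).symm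
  · rw [mem_necklaceOf_one_iff hf hj hfix, mem_necklaceOf_one_iff hf hj' (by omega), hsp]
    omega

end TypeC

theorem statement10_general (n : ℕ) (f : Equiv.Perm ℕ) (W : Finset ℕ)
    (hf : IsDecPermC n f W)
    (C : Finset (Finset ℕ)) (hC : IsWSCollIn n (necklaceOf n f W) C)
    (I : Finset ℕ) (hI : I ∈ C) (hpf : PairFree n I)
    (a : ℕ) (ha : a ∈ Finset.Icc 1 n)
    (hlt : f.symm a < a) :
    2 * n + 1 - a ∈ I := by
  by_contra ha'I
  obtain ⟨hneck, hpos, hws⟩ := hC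
  have hab := mem_Icc.mp ha
  have hone : 1 ∈ Icc 1 (2 * n) := mem_Icc.mpr ⟨le_rfl, by omega⟩
  set J := necklaceOf n f W 1
  have hJC : J ∈ C := hneck 1 hone
  obtain ⟨hIsub, hIcard, hgale⟩ := hpos I hI
  have hJsub : J ⊆ Icc 1 (2 * n) := (hpos J hJC).1
  have hIpair := hpf.oneOfEachPair hIsub hIcard
  have himg := hIpair.image_sdiff (oneOfEachPair_necklaceOf_one hf) hIsub hJsub
  have ha2n : a ∈ Icc 1 (2 * n) := mem_Icc.mpr ⟨hab.1, by omega⟩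
  have haIJ : a ∈ I \ J := mem_sdiff.mpr ⟨(hIpair a ha2n).mpr ha'I,
    (mem_necklaceOf_one_iff hf ha2n hlt.ne).not.mpr (not_lt.mpr hlt.le)⟩
  have hlow := (hws I hI J hJC).le_of_mem_sdiff himg hIsub haIJ hab.2
  have hIJ_lt : ∑ x ∈ I, cpos (2 * n) 1 x < ∑ x ∈ J, cpos (2 * n) 1 x :=
    sum_cpos_one_lt_of_image_sdiff himg hIsub ⟨a, haIJ⟩ hlow
  have hJI_le : ∑ x ∈ J, cpos (2 * n) 1 x ≤ ∑ x ∈ I, cpos (2 * n) 1 x :=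
    (hgale 1 hone).sum_cpos_le ((cpos_injOn hone).mono hJsub) ((cpos_injOn hone).mono hIsub)
  omega

/-- If `I` is a pair-free element of a weakly separated
collection in `M`, `a ∈ [n]`, `f⁻¹(a) ∈ [n]` and `f⁻¹(a) < a`, then `a' ∈ I`. -/
theorem statement10 (n : ℕ) (f : Equiv.Perm ℕ) (W : Finset ℕ)
    (hf : IsDecPermC n f W)
    (C : Finset (Finset ℕ)) (hC : IsWSCollIn n (necklaceOf n f W) C)
    (I : Finset ℕ) (hI : I ∈ C) (hpf : PairFree n I)
    (a : ℕ) (ha : a ∈ Finset.Icc 1 n) (hfa : f.symm a ∈ Finset.Icc 1 n)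
    (hlt : f.symm a < a) :
    2 * n + 1 - a ∈ I :=
  statement10_general n f W hf C hC I hI hpf a ha hlt
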